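/- Let α, β, γ, λ, μ be real numbers and let N(α,β,γ,λ,μ) be the 3×3 real matrix whose rows are (α,β,γ), (λα,λβ,λγ), (μα,μβ,μγ). Suppose α ≠ 0 and α² + λβ² + μγ² ≠ 0. Then: (i) if λ = 0 and μ = 0, the evolution algebra E_{N(α,β,γ,λ,μ)} is isomorphic to E₄ (structure matrix with rows (1,0,0), (0,0,0), (0,0,0)); (ii) if (λ = 0 and μ > 0) or (μ = 0 and λ > 0), it is isomorphic to E₅ (rows (1,0,0), (0,0,0), (1,0,0)); (iii) if (λ = 0 and μ < 0) or (μ = 0 and λ < 0), it is isomorphic to E₆ (rows (1,0,0), (0,0,0), (−1,0,0)). -/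
import Mathlib


/-- Evolution algebra multiplication on ℝ³ determined by a structure matrix `A`:
`(x ∗_A y) j = ∑ i, x i * y i * A i j`. -/
def evolMul (A : Matrix (Fin 3) (Fin 3) ℝ) (x y : Fin 3 → ℝ) : Fin 3 → ℝ :=
  fun j => ∑ i, x i * y i * A i j

/-- The evolution algebras with structure matrices `A` and `B` are isomorphic:
there is an ℝ-linear equivalence of ℝ³ intertwining the two multiplications. -/
def EvolIso (A B : Matrix (Fin 3) (Fin 3) ℝ) : Prop :=
  ∃ f : (Fin 3 → ℝ) ≃ₗ[ℝ] (Fin 3 → ℝ),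
    ∀ x y, f (evolMul A x y) = evolMul B (f x) (f y)

lemma iso_of_mat (A B M : Matrix (Fin 3) (Fin 3) ℝ) (hd : M.det ≠ 0)
    (h : ∀ x y, M.mulVec (evolMul A x y) = evolMul B (M.mulVec x) (M.mulVec y)) :
    EvolIso A B := by
  have hu : IsUnit M.det := isUnit_iff_ne_zero.mpr hd
  have : Invertible M := M.invertibleOfIsUnitDet hu
  refine ⟨M.toLinearEquiv' this, fun x y => ?_⟩
  simpa [Matrix.toLinearEquiv'] using h x y

theorem stmt (a b c l m : ℝ)
    (ha : a ≠ 0) (hq : a ^ 2 + l * b ^ 2 + m * c ^ 2 ≠ 0) :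
    (l = 0 ∧ m = 0 → EvolIso (!![a, b, c; l * a, l * b, l * c; m * a, m * b, m * c] : Matrix (Fin 3) (Fin 3) ℝ) (!![1, 0, 0; 0, 0, 0; 0, 0, 0] : Matrix (Fin 3) (Fin 3) ℝ)) ∧
    ((l = 0 ∧ m > 0) ∨ (m = 0 ∧ l > 0) → EvolIso (!![a, b, c; l * a, l * b, l * c; m * a, m * b, m * c] : Matrix (Fin 3) (Fin 3) ℝ) (!![1, 0, 0; 0, 0, 0; 1, 0, 0] : Matrix (Fin 3) (Fin 3) ℝ)) ∧
    ((l = 0 ∧ m < 0) ∨ (m = 0 ∧ l < 0) → EvolIso (!![a, b, c; l * a, l * b, l * c; m * a, m * b, m * c] : Matrix (Fin 3) (Fin 3) ℝ) (!![1, 0, 0; 0, 0, 0; -1, 0, 0] : Matrix (Fin 3) (Fin 3) ℝ)) := by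
  refine ⟨?_, ?_, ?_⟩
  · rintro ⟨hl, hm⟩
    subst hl; subst hm
    apply iso_of_mat _ _ (!![a, 0, 0; -b, a, 0; -c, 0, a])
    · simp [Matrix.det_fin_three]
      positivity
    · intro x y
      funext j
      fin_cases j <;>
        simp [evolMul, Matrix.mulVec, dotProduct, Fin.sum_univ_three,
          Matrix.cons_val_zero, Matrix.cons_val_one, Matrix.head_cons,
          Matrix.cons_val_two, Matrix.tail_cons, Matrix.vecHead, Matrix.vecTail] <;> ring
  · rintro (⟨hl, hm⟩ | ⟨hm, hl⟩)
    · subst hl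
      obtain ⟨s, hs, hs0⟩ : ∃ s : ℝ, s * s = m ∧ s ≠ 0 :=
        ⟨Real.sqrt m, Real.mul_self_sqrt hm.le, ne_of_gt (Real.sqrt_pos.mpr hm)⟩
      subst hs
      have hD : a ^ 2 + s * s * c ^ 2 ≠ 0 := by simpa using hq
      apply iso_of_mat _ _ (!![a, 0, s * s * c; -b, a, 0; s * c, 0, -(s * a)])
      · have hdet : (!![a, 0, s * s * c; -b, a, 0; s * c, 0, -(s * a)]).det
            = -(s * a * (a ^ 2 + s * s * c ^ 2)) := by
          simp [Matrix.det_fin_three]; ring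
        rw [hdet]
        exact neg_ne_zero.mpr (mul_ne_zero (mul_ne_zero hs0 ha) hD)
      · intro x y
        funext j
        fin_cases j <;>
          simp [evolMul, Matrix.mulVec, dotProduct, Fin.sum_univ_three,
            Matrix.cons_val_zero, Matrix.cons_val_one, Matrix.head_cons,
            Matrix.cons_val_two, Matrix.tail_cons, Matrix.vecHead, Matrix.vecTail] <;> ring
    · subst hm
      obtain ⟨t, ht, ht0⟩ : ∃ t : ℝ, t * t = l ∧ t ≠ 0 :=
        ⟨Real.sqrt l, Real.mul_self_sqrt hl.le, ne_of_gt (Real.sqrt_pos.mpr hl)⟩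
      subst ht
      have hD : a ^ 2 + t * t * b ^ 2 ≠ 0 := by simpa using hq
      apply iso_of_mat _ _ (!![a, t * t * b, 0; -c, 0, a; t * b, -(t * a), 0])
      · have hdet : (!![a, t * t * b, 0; -c, 0, a; t * b, -(t * a), 0]).det
            = t * a * (a ^ 2 + t * t * b ^ 2) := by
          simp [Matrix.det_fin_three]; ring
        rw [hdet]
        exact mul_ne_zero (mul_ne_zero ht0 ha) hD
      · intro x y
        funext j
        fin_cases j <;>
          simp [evolMul, Matrix.mulVec, dotProduct, Fin.sum_univ_three,
            Matrix.cons_val_zero, Matrix.cons_val_one, Matrix.head_cons,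
            Matrix.cons_val_two, Matrix.tail_cons, Matrix.vecHead, Matrix.vecTail] <;> ring
  · rintro (⟨hl, hm⟩ | ⟨hm, hl⟩)
    · subst hl
      obtain ⟨s, hs, hs0⟩ : ∃ s : ℝ, s * s = -m ∧ s ≠ 0 :=
        ⟨Real.sqrt (-m), Real.mul_self_sqrt (by linarith), ne_of_gt (Real.sqrt_pos.mpr (by linarith))⟩
      have hm' : m = -(s * s) := by linarith
      subst hm'
      have hD : a ^ 2 + -(s * s) * c ^ 2 ≠ 0 := by simpa using hq
      apply iso_of_mat _ _ (!![a, 0, -(s * s) * c; -b, a, 0; s * c, 0, -(s * a)])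
      · have hdet : (!![a, 0, -(s * s) * c; -b, a, 0; s * c, 0, -(s * a)]).det
            = -(s * a * (a ^ 2 + -(s * s) * c ^ 2)) := by
          simp [Matrix.det_fin_three]; ring
        rw [hdet]
        exact neg_ne_zero.mpr (mul_ne_zero (mul_ne_zero hs0 ha) hD)
      · intro x y
        funext j
        fin_cases j <;>
          simp [evolMul, Matrix.mulVec, dotProduct, Fin.sum_univ_three,
            Matrix.cons_val_zero, Matrix.cons_val_one, Matrix.head_cons,
            Matrix.cons_val_two, Matrix.tail_cons, Matrix.vecHead, Matrix.vecTail] <;> ring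
    · subst hm
      obtain ⟨t, ht, ht0⟩ : ∃ t : ℝ, t * t = -l ∧ t ≠ 0 :=
        ⟨Real.sqrt (-l), Real.mul_self_sqrt (by linarith), ne_of_gt (Real.sqrt_pos.mpr (by linarith))⟩
      have hl' : l = -(t * t) := by linarith
      subst hl'
      have hD : a ^ 2 + -(t * t) * b ^ 2 ≠ 0 := by simpa using hq
      apply iso_of_mat _ _ (!![a, -(t * t) * b, 0; -c, 0, a; t * b, -(t * a), 0])
      · have hdet : (!![a, -(t * t) * b, 0; -c, 0, a; t * b, -(t * a), 0]).det
            = t * a * (a ^ 2 + -(t * t) * b ^ 2) := by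
          simp [Matrix.det_fin_three]; ring
        rw [hdet]
        exact mul_ne_zero (mul_ne_zero ht0 ha) hD
      · intro x y
        funext j
        fin_cases j <;>
          simp [evolMul, Matrix.mulVec, dotProduct, Fin.sum_univ_three,
            Matrix.cons_val_zero, Matrix.cons_val_one, Matrix.head_cons,
            Matrix.cons_val_two, Matrix.tail_cons, Matrix.vecHead, Matrix.vecTail] <;> ring
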